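/- arXiv:2002.05299 — 7 statements merged into one kernel-verified Lean document; each statement's English description precedes it below -/
import Mathlib

section
/- Let X be a finite set of n points in R^D. Then there exists a point y in R^D whose Tukey depth in X is at least ⌈n/(D+1)⌉, where the Tukey depth of y in X is the minimum over all unit vectors u of the number of points x in X with ⟨u, x - y⟩ ≥ 0. -/
/-!
Put `d = finrank E` and `m = #X - k` where `(d + 1) * k < #X`. Any `d + 1` subsets of `X` of
size `m` miss at most `(d + 1) * k < #X` points of `X` altogether, so they share a point; by
Helly's theorem the convex hulls of all `m`-subsets of `X` then share a point `y`. A closed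
halfspace bounded at `y` with at most `k` points of `X` would leave an `m`-subset of `X` in the
complementary open halfspace, whose convex hull misses `y`.
-/

open RealInnerProductSpace Classical Finset Module

theorem Finset.exists_forall_mem_of_sum_card_sdiff_lt {α : Type*} [DecidableEq α]
    (X : Finset α) (I : Finset (Finset α)) (h : ∑ S ∈ I, #(X \ S) < #X) :
    ∃ x ∈ X, ∀ S ∈ I, x ∈ S := by
  have hcard : #(I.biUnion (X \ ·)) < #X := card_biUnion_le.trans_lt h
  obtain ⟨x, hxX, hx⟩ := not_subset.mp fun hsub => (card_le_card hsub).not_gt hcard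
  refine ⟨x, hxX, fun S hS => ?_⟩
  by_contra hxS
  exact hx (mem_biUnion.mpr ⟨S, hS, mem_sdiff.mpr ⟨hxX, hxS⟩⟩)

section Centerpoint

variable {𝕜 E : Type*} [Field 𝕜] [LinearOrder 𝕜] [IsStrictOrderedRing 𝕜]
  [AddCommGroup E] [Module 𝕜 E]

theorem lt_add_card_filter_le_of_forall_mem_convexHull {X : Finset E} {m : ℕ} {y : E}
    (hy : ∀ S ∈ X.powersetCard m, y ∈ convexHull 𝕜 (S : Set E)) (f : E →ₗ[𝕜] 𝕜) :
    #X < m + #{x ∈ X | f y ≤ f x} := by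
  by_contra! hle
  have hbelow : m ≤ #{x ∈ X | f x < f y} := by
    have := card_filter_add_card_filter_not (s := X) (p := fun x => f y ≤ f x)
    simp only [not_le] at this
    omega
  obtain ⟨S, hSbelow, hS⟩ := exists_subset_card_eq hbelow
  obtain ⟨x, hxS, hyx⟩ := (f.convexOn convex_univ).exists_ge_of_mem_convexHull
    (Set.subset_univ _) (hy S (mem_powersetCard.mpr ⟨hSbelow.trans (filter_subset _ _), hS⟩))
  exact (mem_filter.mp (hSbelow hxS)).2.not_ge hyx

variable [FiniteDimensional 𝕜 E]

theorem exists_forall_lt_card_filter_le_of_mul_lt_card {X : Finset E} {k : ℕ}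
    (hk : (finrank 𝕜 E + 1) * k < #X) :
    ∃ y : E, ∀ f : E →ₗ[𝕜] 𝕜, k < #{x ∈ X | f y ≤ f x} := by
  have hkX : k ≤ #X := (Nat.le_mul_of_pos_left k (Nat.succ_pos _)).trans hk.le
  obtain ⟨y, hy⟩ : (⋂ S ∈ X.powersetCard (#X - k), convexHull 𝕜 (S : Set E)).Nonempty := by
    refine Convex.helly_theorem' (fun S _ => convex_convexHull 𝕜 _) fun I hI hIcard => ?_
    have hsum : ∑ S ∈ I, #(X \ S) < #X := by
      calc ∑ S ∈ I, #(X \ S) = #I * k := by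
            refine sum_const_nat fun S hS => ?_
            obtain ⟨hSX, hS⟩ := mem_powersetCard.mp (hI hS)
            rw [card_sdiff_of_subset hSX, hS]
            omega
        _ ≤ (finrank 𝕜 E + 1) * k := Nat.mul_le_mul_right k hIcard
        _ < #X := hk
    obtain ⟨x, -, hx⟩ := X.exists_forall_mem_of_sum_card_sdiff_lt I hsum
    exact ⟨x, Set.mem_iInter₂.mpr fun S hS => subset_convexHull 𝕜 _ (hx S hS)⟩
  refine ⟨y, fun f => ?_⟩
  have := lt_add_card_filter_le_of_forall_mem_convexHull (Set.mem_iInter₂.mp hy) f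
  omega

theorem exists_forall_ceil_le_card_filter_le [FloorSemiring 𝕜] (X : Finset E) :
    ∃ y : E, ∀ f : E →ₗ[𝕜] 𝕜, ⌈(#X : 𝕜) / (finrank 𝕜 E + 1)⌉₊ ≤ #{x ∈ X | f y ≤ f x} := by
  set k := ⌈(#X : 𝕜) / (finrank 𝕜 E + 1)⌉₊
  rcases Nat.eq_zero_or_pos k with hk0 | hkpos
  · exact ⟨0, fun f => hk0 ▸ Nat.zero_le _⟩
  have hlt : ((k - 1 : ℕ) : 𝕜) < #X / (finrank 𝕜 E + 1) := Nat.lt_ceil.mp (by omega)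
  rw [lt_div_iff₀ (by positivity), mul_comm] at hlt
  obtain ⟨y, hy⟩ := exists_forall_lt_card_filter_le_of_mul_lt_card (𝕜 := 𝕜) (X := X) (k := k - 1)
    (by exact_mod_cast hlt)
  exact ⟨y, fun f => by have := hy f; omega⟩

end Centerpoint

/-- Rado's centerpoint theorem: any finite set `X` of `n` points in `ℝ^D` admits a point `y`
whose Tukey depth in `X` is at least `⌈n/(D+1)⌉`, i.e. every closed halfspace whose boundary
hyperplane passes through `y` contains at least `⌈n/(D+1)⌉` points of `X`. -/
theorem rado_centerpoint (D n : ℕ) (X : Finset (EuclideanSpace ℝ (Fin D)))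
    (hX : X.card = n) :
    ∃ y : EuclideanSpace ℝ (Fin D), ∀ u : EuclideanSpace ℝ (Fin D), ‖u‖ = 1 →
      ⌈(n : ℝ) / (D + 1)⌉₊ ≤ (X.filter (fun x => 0 ≤ ⟪u, x - y⟫)).card := by
  obtain ⟨y, hy⟩ := exists_forall_ceil_le_card_filter_le (𝕜 := ℝ) X
  rw [finrank_euclideanSpace_fin, hX] at hy
  refine ⟨y, fun u _ => ?_⟩
  convert hy (innerₗ _ u) using 3
  simp only [innerₗ_apply_apply, inner_sub_right, sub_nonneg]
end

section
/- Let X = {x_1,…,x_n} ⊂ R^D be a finite set and Y ⊆ X a subset such that (i) #Y > n − n/(2D+2), (ii) Y is contained in a closed halfspace {x : ⟨v, x⟩ ≥ 0} for some nonzero v, and (iii) every point of Y on the hyperplane {x : ⟨v, x⟩ = 0} equals 0. Then the relative interior of the depth level set D_{1/(2D+2)}(X) is contained in the convex hull of Y, which in turn is contained in the open halfspace {x : ⟨v, x⟩ > 0} together with the point 0. -/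
open RealInnerProductSpace Classical

/-!
If `y` lies outside `conv Y`, a hyperplane through `y` separates it from `Y`; the closed halfspace
on the far side contains no point of `Y`, so `depth(y, X) ≤ #X - #Y < #X / (2D+2)`. Hence the whole
level set, and a fortiori its relative interior, lies in `conv Y`. The second inclusion holds
because `{⟪v, x⟫ > 0} ∪ {0}` is convex and contains `Y`.
-/

/-- Tukey depth. -/
noncomputable def tdepth {D : ℕ} (y : EuclideanSpace ℝ (Fin D))
    (X : Finset (EuclideanSpace ℝ (Fin D))) : ℕ :=
  sInf {m : ℕ | ∃ u : EuclideanSpace ℝ (Fin D), ‖u‖ = 1 ∧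
    m = (X.filter (fun x => 0 ≤ ⟪u, x - y⟫)).card}

/-- The β-depth level set `D_β(X)`. -/
noncomputable def depthLevelSet {D : ℕ} (β : ℝ) (X : Finset (EuclideanSpace ℝ (Fin D))) :
    Set (EuclideanSpace ℝ (Fin D)) :=
  {y | β * X.card ≤ (tdepth y X : ℝ)}

theorem mem_insert_zero_setOf_pos_iff {𝕜 E : Type*} [Semiring 𝕜] [PartialOrder 𝕜]
    [AddCommMonoid E] [Module 𝕜 E] (f : E →ₗ[𝕜] 𝕜) {x : E} :
    x ∈ insert 0 {x | 0 < f x} ↔ 0 ≤ f x ∧ (f x = 0 → x = 0) := by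
  constructor
  · rintro (rfl | hx)
    · simp
    · exact ⟨hx.le, fun h => absurd h hx.ne'⟩
  · rintro ⟨hx, hx0⟩
    rcases hx.eq_or_lt with h | h
    · exact Or.inl (hx0 h.symm)
    · exact Or.inr h

theorem convex_insert_zero_setOf_pos {𝕜 E : Type*} [Field 𝕜] [LinearOrder 𝕜]
    [IsStrictOrderedRing 𝕜] [AddCommGroup E] [Module 𝕜 E] (f : E →ₗ[𝕜] 𝕜) :
    Convex 𝕜 (insert 0 {x | 0 < f x}) := by
  intro x hx z hz a b ha hb _
  rw [mem_insert_zero_setOf_pos_iff] at hx hz ⊢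
  have hax : 0 ≤ a * f x := mul_nonneg ha hx.1
  have hbz : 0 ≤ b * f z := mul_nonneg hb hz.1
  simp only [map_add, map_smul, smul_eq_mul]
  refine ⟨add_nonneg hax hbz, fun h => ?_⟩
  have hsmul {c : 𝕜} {w : E} (hw : f w = 0 → w = 0) (hc : c * f w = 0) :
      c • w = 0 := by
    rcases mul_eq_zero.1 hc with hc | hw0
    · rw [hc, zero_smul]
    · rw [hw hw0, smul_zero]
  rw [hsmul hx.2 (by linarith), hsmul hz.2 (by linarith), add_zero]

theorem exists_norm_eq_one_inner_sub_neg_of_notMem {E : Type*} [NormedAddCommGroup E]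
    [InnerProductSpace ℝ E] [CompleteSpace E] {s : Set E} {y : E} (hconv : Convex ℝ s)
    (hclosed : IsClosed s) (hne : s.Nonempty) (hy : y ∉ s) :
    ∃ u : E, ‖u‖ = 1 ∧ ∀ x ∈ s, ⟪u, x - y⟫ < 0 := by
  obtain ⟨f, c, hfs, hcy⟩ := geometric_hahn_banach_closed_point hconv hclosed hy
  set w := (InnerProductSpace.toDual ℝ E).symm f
  have hw : ∀ a, ⟪w, a⟫ = f a := fun a => InnerProductSpace.toDual_symm_apply
  obtain ⟨x₀, hx₀⟩ := hne
  have hw0 : w ≠ 0 := by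
    intro h
    have := hfs x₀ hx₀
    simp only [← hw, h, inner_zero_left] at this hcy
    linarith
  refine ⟨‖w‖⁻¹ • w, norm_smul_inv_norm hw0, fun x hx => ?_⟩
  rw [real_inner_smul_left, inner_sub_right, hw, hw]
  have := hfs x hx
  exact mul_neg_of_pos_of_neg (inv_pos.2 (norm_pos_iff.2 hw0)) (by linarith)

section Depth

variable {D : ℕ} {y : EuclideanSpace ℝ (Fin D)} {X Y : Finset (EuclideanSpace ℝ (Fin D))}

theorem tdepth_le_card_filter {u : EuclideanSpace ℝ (Fin D)} (hu : ‖u‖ = 1) :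
    tdepth y X ≤ (X.filter (fun x => 0 ≤ ⟪u, x - y⟫)).card :=
  Nat.sInf_le ⟨u, hu, rfl⟩

theorem tdepth_le_card : tdepth y X ≤ X.card := by
  by_cases hD : ∃ u : EuclideanSpace ℝ (Fin D), ‖u‖ = 1
  · obtain ⟨u, hu⟩ := hD
    exact (tdepth_le_card_filter hu).trans (Finset.card_filter_le _ _)
  · -- only in dimension `0`, where `tdepth` is the junk value `sInf ∅ = 0`
    push Not at hD
    have : tdepth y X = 0 := Nat.sInf_eq_zero.2 (Or.inr (by
      ext m
      simpa using fun u hu => absurd hu (hD u)))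
    omega

theorem tdepth_le_card_sdiff_of_notMem_convexHull (hy : y ∉ convexHull ℝ (Y : Set _)) :
    tdepth y X ≤ (X \ Y).card := by
  rcases Y.eq_empty_or_nonempty with rfl | hne
  · simpa using tdepth_le_card
  obtain ⟨u, hu, hneg⟩ := exists_norm_eq_one_inner_sub_neg_of_notMem (convex_convexHull ℝ _)
    (Y.finite_toSet.isClosed_convexHull ℝ) (Finset.coe_nonempty.2 hne).convexHull hy
  refine (tdepth_le_card_filter hu).trans (Finset.card_le_card fun x hx => ?_)
  rw [Finset.mem_filter] at hx
  exact Finset.mem_sdiff.2 ⟨hx.1, fun hxY =>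
    hx.2.not_gt (hneg x (subset_convexHull ℝ _ hxY))⟩

theorem depthLevelSet_subset_convexHull {β : ℝ} (hYX : Y ⊆ X)
    (hβ : (X.card : ℝ) - Y.card < β * X.card) :
    depthLevelSet β X ⊆ convexHull ℝ (Y : Set _) := by
  intro y hy
  by_contra hyY
  have hdepth : (tdepth y X : ℝ) ≤ X.card - Y.card := by
    rw [← Nat.cast_sub (Finset.card_le_card hYX), ← Finset.card_sdiff_of_subset hYX]
    exact_mod_cast tdepth_le_card_sdiff_of_notMem_convexHull hyY
  exact (hdepth.trans_lt hβ).not_ge hy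

end Depth

theorem depth_level_set_in_halfspace_general (D n : ℕ) (X Y : Finset (EuclideanSpace ℝ (Fin D)))
    (hX : X.card = n) (hYX : Y ⊆ X)
    (v : EuclideanSpace ℝ (Fin D))
    (hcard : (n : ℝ) - (n : ℝ) / (2 * D + 2) < (Y.card : ℝ))
    (hhalf : ∀ y ∈ Y, 0 ≤ ⟪v, y⟫)
    (hbdry : ∀ y ∈ Y, ⟪v, y⟫ = 0 → y = 0) :
    intrinsicInterior ℝ (depthLevelSet (1 / (2 * D + 2)) X) ⊆
        convexHull ℝ (Y : Set (EuclideanSpace ℝ (Fin D))) ∧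
      convexHull ℝ (Y : Set (EuclideanSpace ℝ (Fin D))) ⊆
        {x : EuclideanSpace ℝ (Fin D) | 0 < ⟪v, x⟫} ∪ {0} := by
  refine ⟨intrinsicInterior_subset.trans (depthLevelSet_subset_convexHull hYX ?_), ?_⟩
  · rw [hX, one_div_mul_eq_div]
    linarith
  · rw [Set.union_singleton]
    exact convexHull_min
      (fun y hy => (mem_insert_zero_setOf_pos_iff (innerₛₗ ℝ v)).2 ⟨hhalf y hy, hbdry y hy⟩)
      (convex_insert_zero_setOf_pos (innerₛₗ ℝ v))

/-- If `Y ⊆ X` contains more than `n - n/(2D+2)` of the `n` points of `X`, lies in the closed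
halfspace `{⟪v, x⟫ ≥ 0}`, and the only point of `Y` on the boundary hyperplane is `0`, then the
relative interior of `D_{1/(2D+2)}(X)` is contained in `conv(Y)`, which is contained in the open
halfspace together with `{0}`. -/
theorem depth_level_set_in_halfspace (D n : ℕ) (X Y : Finset (EuclideanSpace ℝ (Fin D)))
    (hX : X.card = n) (hYX : Y ⊆ X)
    (v : EuclideanSpace ℝ (Fin D)) (hv : v ≠ 0)
    (hcard : (n : ℝ) - (n : ℝ) / (2 * D + 2) < (Y.card : ℝ))
    (hhalf : ∀ y ∈ Y, 0 ≤ ⟪v, y⟫)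
    (hbdry : ∀ y ∈ Y, ⟪v, y⟫ = 0 → y = 0) :
    intrinsicInterior ℝ (depthLevelSet (1 / (2 * D + 2)) X) ⊆
        convexHull ℝ (Y : Set (EuclideanSpace ℝ (Fin D))) ∧
      convexHull ℝ (Y : Set (EuclideanSpace ℝ (Fin D))) ⊆
        {x : EuclideanSpace ℝ (Fin D) | 0 < ⟪v, x⟫} ∪ {0} :=
  depth_level_set_in_halfspace_general D n X Y hX hYX v hcard hhalf hbdry
end

section
/- Let X = {x_1,…,x_n} ⊂ R^D and Y ⊆ X satisfy: #Y > n − n/(2D+2); Y is contained in the closed halfspace {x : ⟨v, x⟩ ≥ 0}; every point of Y on the hyperplane {⟨v, x⟩ = 0} equals 0; and fewer than n/2 points of Y lie on that hyperplane. Then there exists a point z with ⟨v, z⟩ > 0 whose Tukey depth in X is at least n/(2(D+1)). -/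
open RealInnerProductSpace Classical

/-!
Let `c` be a centerpoint of `Y` (Rado's theorem, obtained from Helly's theorem applied to the
convex hulls of the subsets of `Y` that miss fewer than `#Y / (D + 1)` of its points). Every closed
halfspace through `c` contains at least `#Y / (D + 1) > n / (2(D + 1))` points of `Y ⊆ X`. If
`#Y > D + 1`, the halfspace `{⟪v, x⟫ ≤ ⟪v, c⟫}` thus holds at least two points of `Y`; since `0` is
the only point of `Y` with `⟪v, y⟫ ≤ 0`, this forces `⟪v, c⟫ > 0`. Otherwise the required depth is
at most `1`, which every point of `X` has, and a point of `Y` off the hyperplane exists because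
fewer than `n / 2 < #Y` points of `Y` lie on it.
-/

open Finset

theorem Finset.card_biUnion_lt_of_mul_card_lt {α : Type*} [DecidableEq α] {k m : ℕ}
    {I : Finset (Finset α)} (hI : I.Nonempty) (hIk : #I ≤ k) (h : ∀ R ∈ I, k * #R < m) :
    #(I.biUnion id) < m := by
  refine Nat.lt_of_mul_lt_mul_left (a := k) ?_
  calc k * #(I.biUnion id)
      ≤ k * ∑ R ∈ I, #R := Nat.mul_le_mul_left _ card_biUnion_le
    _ = ∑ R ∈ I, k * #R := mul_sum _ _ _
    _ < ∑ _R ∈ I, m := sum_lt_sum_of_nonempty hI h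
    _ = #I * m := by rw [sum_const, smul_eq_mul]
    _ ≤ k * m := Nat.mul_le_mul_right _ hIk

section Centerpoint

variable {E : Type*}

theorem exists_mem_convexHull_sdiff_of_mul_card_lt [AddCommGroup E] [Module ℝ E]
    [FiniteDimensional ℝ E] (Y : Finset E) :
    ∃ c : E, ∀ R ⊆ Y, (Module.finrank ℝ E + 1) * #R < #Y →
      c ∈ convexHull ℝ (↑(Y \ R) : Set E) := by
  set small := Y.powerset.filter fun R => (Module.finrank ℝ E + 1) * #R < #Y
  obtain ⟨c, hc⟩ : (⋂ R ∈ small, convexHull ℝ (↑(Y \ R) : Set E)).Nonempty := by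
    refine Convex.helly_theorem' (fun _ _ => convex_convexHull ℝ _) fun I hI hIcard => ?_
    rcases I.eq_empty_or_nonempty with rfl | hIne
    · simp
    have hsmall : ∀ R ∈ I, (Module.finrank ℝ E + 1) * #R < #Y := fun R hR =>
      (mem_filter.1 (hI hR)).2
    obtain ⟨y, hyY, hyI⟩ := exists_mem_notMem_of_card_lt_card
      (card_biUnion_lt_of_mul_card_lt hIne hIcard hsmall)
    refine ⟨y, Set.mem_iInter₂.2 fun R hR => subset_convexHull ℝ _ ?_⟩
    exact mem_sdiff.2 ⟨hyY, fun hyR => hyI (mem_biUnion.2 ⟨R, hR, hyR⟩)⟩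
  exact ⟨c, fun R hRY hR => Set.mem_iInter₂.1 hc R (mem_filter.2 ⟨mem_powerset.2 hRY, hR⟩)⟩

variable [NormedAddCommGroup E] [InnerProductSpace ℝ E]

theorem exists_centerpoint [FiniteDimensional ℝ E] (Y : Finset E) :
    ∃ c : E, ∀ u : E, #Y ≤ (Module.finrank ℝ E + 1) * #(Y.filter fun y => 0 ≤ ⟪u, y - c⟫) := by
  obtain ⟨c, hc⟩ := exists_mem_convexHull_sdiff_of_mul_card_lt Y
  refine ⟨c, fun u => not_lt.1 fun hlt => ?_⟩
  have hcR := hc _ (filter_subset _ _) hlt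
  rw [← filter_not] at hcR
  have hhalf : convexHull ℝ (↑(Y.filter fun y => ¬0 ≤ ⟪u, y - c⟫) : Set E) ⊆
      {x | ⟪u, x⟫ < ⟪u, c⟫} := by
    refine convexHull_min (fun y hy => ?_) (convex_halfSpace_lt (innerₛₗ ℝ u).isLinear _)
    have hyc := (mem_filter.1 hy).2
    rw [inner_sub_right] at hyc
    exact sub_neg.1 (not_le.1 hyc)
  exact lt_irrefl ⟪u, c⟫ (hhalf hcR)

theorem exists_mem_inner_pos_of_card_filter_lt {Y : Finset E} {v : E}
    (hhalf : ∀ y ∈ Y, 0 ≤ ⟪v, y⟫) (h : #(Y.filter fun y => ⟪v, y⟫ = 0) < #Y) :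
    ∃ y ∈ Y, 0 < ⟪v, y⟫ := by
  by_contra! hneg
  rw [filter_true_of_mem fun y hy => le_antisymm (hneg y hy) (hhalf y hy)] at h
  exact lt_irrefl _ h

theorem inner_pos_of_one_lt_card_filter {Y : Finset E} {v c : E}
    (hhalf : ∀ y ∈ Y, 0 ≤ ⟪v, y⟫) (hbdry : ∀ y ∈ Y, ⟪v, y⟫ = 0 → y = 0)
    (h : 1 < #(Y.filter fun y => 0 ≤ ⟪-v, y - c⟫)) : 0 < ⟪v, c⟫ := by
  by_contra! hc
  have hsub : (Y.filter fun y => 0 ≤ ⟪-v, y - c⟫) ⊆ {0} := by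
    intro y hy
    obtain ⟨hyY, hy⟩ := mem_filter.1 hy
    rw [inner_neg_left, inner_sub_right] at hy
    exact mem_singleton.2 (hbdry y hyY (le_antisymm (by linarith) (hhalf y hyY)))
  exact absurd ((card_le_card hsub).trans_eq (card_singleton _)) (not_le.2 h)

end Centerpoint

theorem exists_norm_eq_one_tdepth_eq {D : ℕ} (hD : 0 < D) (z : EuclideanSpace ℝ (Fin D))
    (X : Finset (EuclideanSpace ℝ (Fin D))) :
    ∃ u : EuclideanSpace ℝ (Fin D), ‖u‖ = 1 ∧
      tdepth z X = #(X.filter fun x => 0 ≤ ⟪u, x - z⟫) := by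
  have hunit : ‖EuclideanSpace.single (⟨0, hD⟩ : Fin D) (1 : ℝ)‖ = 1 := by simp
  exact Nat.sInf_mem (s := {m | ∃ u : EuclideanSpace ℝ (Fin D), ‖u‖ = 1 ∧
    m = #(X.filter fun x => 0 ≤ ⟪u, x - z⟫)}) ⟨_, _, hunit, rfl⟩

theorem one_le_tdepth_of_mem {D : ℕ} (hD : 0 < D) {z : EuclideanSpace ℝ (Fin D)}
    {X : Finset (EuclideanSpace ℝ (Fin D))} (hz : z ∈ X) : 1 ≤ tdepth z X := by
  obtain ⟨u, -, hu⟩ := exists_norm_eq_one_tdepth_eq hD z X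
  rw [hu, Nat.one_le_iff_ne_zero, ← pos_iff_ne_zero, card_pos]
  exact ⟨z, mem_filter.2 ⟨hz, by simp⟩⟩

theorem deep_point_in_open_halfspace_general (D n : ℕ) (X Y : Finset (EuclideanSpace ℝ (Fin D)))
    (hYX : Y ⊆ X)
    (v : EuclideanSpace ℝ (Fin D))
    (hcard : (n : ℝ) - (n : ℝ) / (2 * D + 2) < (Y.card : ℝ))
    (hhalf : ∀ y ∈ Y, 0 ≤ ⟪v, y⟫)
    (hbdry : ∀ y ∈ Y, ⟪v, y⟫ = 0 → y = 0)
    (hfew : ((Y.filter (fun y => ⟪v, y⟫ = 0)).card : ℝ) < (n : ℝ) / 2) :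
    ∃ z : EuclideanSpace ℝ (Fin D), 0 < ⟪v, z⟫ ∧
      (n : ℝ) / (2 * (D + 1)) ≤ (tdepth z X : ℝ) := by
  have hnY : (n : ℝ) < 2 * #Y := by
    have : (n : ℝ) / (2 * D + 2) ≤ n / 2 :=
      div_le_div_of_nonneg_left n.cast_nonneg two_pos (by linarith [D.cast_nonneg (α := ℝ)])
    linarith
  have hbdry_card : ((Y.filter fun y => ⟪v, y⟫ = 0).card : ℝ) < #Y := by linarith
  obtain ⟨y₀, hy₀Y, hy₀⟩ := exists_mem_inner_pos_of_card_filter_lt hhalf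
    (by exact_mod_cast hbdry_card)
  have hD : 0 < D := Nat.pos_of_ne_zero fun h => by
    subst h
    exact hy₀.ne' (by rw [Subsingleton.elim v 0, inner_zero_left])
  obtain ⟨z, hvz, hz⟩ : ∃ z, 0 < ⟪v, z⟫ ∧ #Y ≤ (D + 1) * tdepth z X := by
    obtain ⟨c, hc⟩ := exists_centerpoint Y
    rw [finrank_euclideanSpace_fin] at hc
    by_cases hbig : D + 1 < #Y
    · refine ⟨c, inner_pos_of_one_lt_card_filter hhalf hbdry ?_, ?_⟩
      · exact Nat.lt_of_mul_lt_mul_left ((mul_one _).trans_lt (hbig.trans_le (hc (-v))))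
      · obtain ⟨u, -, hu⟩ := exists_norm_eq_one_tdepth_eq hD c X
        rw [hu]
        exact (hc u).trans (Nat.mul_le_mul_left _ (card_le_card (filter_subset_filter _ hYX)))
    · exact ⟨y₀, hy₀, (not_lt.1 hbig).trans
        (Nat.le_mul_of_pos_right _ (one_le_tdepth_of_mem hD (hYX hy₀Y)))⟩
  refine ⟨z, hvz, (div_le_iff₀ (by positivity)).2 ?_⟩
  have : (#Y : ℝ) ≤ (D + 1) * tdepth z X := by exact_mod_cast hz
  linarith

/-- If `Y ⊆ X` contains more than `n - n/(2D+2)` points, lies in the closed halfspace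
`{⟪v, x⟫ ≥ 0}` with all boundary points of `Y` equal to `0`, and fewer than `n/2` points of `Y`
lie on the boundary hyperplane, then there is a point `z` strictly inside the halfspace with
Tukey depth at least `n/(2(D+1))` in `X`. -/
theorem deep_point_in_open_halfspace (D n : ℕ) (X Y : Finset (EuclideanSpace ℝ (Fin D)))
    (hX : X.card = n) (hYX : Y ⊆ X)
    (v : EuclideanSpace ℝ (Fin D)) (hv : v ≠ 0)
    (hcard : (n : ℝ) - (n : ℝ) / (2 * D + 2) < (Y.card : ℝ))
    (hhalf : ∀ y ∈ Y, 0 ≤ ⟪v, y⟫)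
    (hbdry : ∀ y ∈ Y, ⟪v, y⟫ = 0 → y = 0)
    (hfew : ((Y.filter (fun y => ⟪v, y⟫ = 0)).card : ℝ) < (n : ℝ) / 2) :
    ∃ z : EuclideanSpace ℝ (Fin D), 0 < ⟪v, z⟫ ∧
      (n : ℝ) / (2 * (D + 1)) ≤ (tdepth z X : ℝ) :=
  deep_point_in_open_halfspace_general D n X Y hYX v hcard hhalf hbdry hfew
end

section
/- Let X be a finite multiset of n real numbers and suppose more than 3n/4 of them lie in an interval [a, b]. Then every element of the 1/4-trimmed set T_{0.25}X (the elements between the empirical 0.25- and 0.75-quantiles of X) lies in [a, b], and hence the trimmed average ave(T_{0.25}X) lies in [a, b]. -/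
open Classical

/-- The `p`-th empirical quantile of a finite multiset of reals. -/
noncomputable def mQuantile (p : ℝ) (X : Multiset ℝ) : ℝ :=
  (X.sort (· ≤ ·)).getD (⌈p * X.card⌉₊ - 1) 0

/-- The 1/4-trimming operator: elements between the 0.25- and 0.75-quantiles. -/
noncomputable def trim25 (X : Multiset ℝ) : Multiset ℝ :=
  X.filter (fun x => mQuantile 0.25 X ≤ x ∧ x ≤ mQuantile 0.75 X)

/-!
The `p`-quantile is the `⌈pn⌉`-th smallest element. If fewer than `pn` elements lie below `a`,
the first `⌈pn⌉` sorted elements cannot all lie below `a`, so the quantile is `≥ a`; dually, if at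
most `(1 - p)n` elements lie above `b`, the last `n - ⌈pn⌉ + 1 > (1 - p)n` sorted elements cannot
all lie above `b`. With more than `3n/4` inliers there are fewer than `n/4` elements on either side
of `[a, b]`, which puts both quartiles, hence the whole trimmed set and its mean, in `[a, b]`.
-/

namespace List

variable {α : Type*} [Preorder α] {l : List α}

theorem SortedLE.succ_le_countP_lt (hl : l.SortedLE) {i : ℕ} (hi : i < l.length) {a : α}
    (h : l[i] < a) : i + 1 ≤ l.countP (· < a) :=
  calc i + 1 = (l.take (i + 1)).length := by rw [length_take]; omega
    _ = (l.take (i + 1)).countP (· < a) := by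
      refine (countP_eq_length.mpr fun x hx => ?_).symm
      obtain ⟨j, hj, rfl⟩ := getElem_of_mem hx
      simp only [getElem_take, decide_eq_true_eq]
      exact (hl.getElem_le_getElem_of_le (by rw [length_take] at hj; omega)).trans_lt h
    _ ≤ l.countP (· < a) := (take_sublist _ _).countP_le

theorem SortedLE.length_sub_le_countP_gt (hl : l.SortedLE) {i : ℕ} (hi : i < l.length) {b : α}
    (h : b < l[i]) : l.length - i ≤ l.countP (b < ·) :=
  calc l.length - i = (l.drop i).length := (length_drop ..).symm
    _ = (l.drop i).countP (b < ·) := by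
      refine (countP_eq_length.mpr fun x hx => ?_).symm
      obtain ⟨j, hj, rfl⟩ := getElem_of_mem hx
      simp only [getElem_drop, decide_eq_true_eq]
      exact h.trans_le (hl.getElem_le_getElem_of_le (by omega))
    _ ≤ l.countP (b < ·) := (drop_sublist _ _).countP_le

end List

namespace Multiset

variable {α : Type*}

theorem card_filter_add_card_filter_le (s : Multiset α) {p q : α → Prop} [DecidablePred p]
    [DecidablePred q] (h : ∀ x ∈ s, p x → ¬q x) :
    card (s.filter p) + card (s.filter q) ≤ card s := by
  have hpq : s.filter (fun x => p x ∧ q x) = 0 :=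
    filter_eq_nil.mpr fun x hx hpq => h x hx hpq.1 hpq.2
  rw [← card_add, filter_add_filter, hpq, add_zero]
  exact card_le_card (filter_le _ _)

theorem sum_div_card_mem_Icc {K : Type*} [Field K] [LinearOrder K] [IsStrictOrderedRing K]
    {s : Multiset K} {a b : K} (hs : 0 < card s) (h : ∀ x ∈ s, x ∈ Set.Icc a b) :
    s.sum / card s ∈ Set.Icc a b := by
  have hcard : (0 : K) < card s := by exact_mod_cast hs
  constructor
  · rw [le_div_iff₀ hcard, mul_comm, ← nsmul_eq_mul]
    exact card_nsmul_le_sum fun x hx => (h x hx).1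
  · rw [div_le_iff₀ hcard, mul_comm, ← nsmul_eq_mul]
    exact sum_le_card_nsmul _ _ fun x hx => (h x hx).2

end Multiset

section Quantile

variable {p q a b : ℝ} {X : Multiset ℝ}

theorem mQuantile_index_lt (hp : p ≤ 1) (hX : X ≠ 0) :
    ⌈p * X.card⌉₊ - 1 < (X.sort (· ≤ ·)).length := by
  have hcard := Multiset.card_pos.mpr hX
  have : ⌈p * X.card⌉₊ ≤ X.card := Nat.ceil_le.mpr (by nlinarith)
  rw [Multiset.length_sort]
  omega

theorem mQuantile_eq_getElem (hp : p ≤ 1) (hX : X ≠ 0) :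
    mQuantile p X = (X.sort (· ≤ ·))[⌈p * X.card⌉₊ - 1]'(mQuantile_index_lt hp hX) :=
  List.getD_eq_getElem _ _ _

theorem mQuantile_mem (hp : p ≤ 1) (hX : X ≠ 0) : mQuantile p X ∈ X := by
  rw [mQuantile_eq_getElem hp hX]
  exact (Multiset.mem_sort _).mp (List.getElem_mem _)

theorem mQuantile_mono (hpq : p ≤ q) (hq : q ≤ 1) (hX : X ≠ 0) :
    mQuantile p X ≤ mQuantile q X := by
  rw [mQuantile_eq_getElem (hpq.trans hq) hX, mQuantile_eq_getElem hq hX]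
  have : ⌈p * X.card⌉₊ ≤ ⌈q * X.card⌉₊ := Nat.ceil_mono (by gcongr)
  exact (X.pairwise_sort _).sortedLE.getElem_le_getElem_of_le (by omega)

theorem le_mQuantile_of_card_filter_lt (hp : p ≤ 1)
    (h : ((X.filter (· < a)).card : ℝ) < p * X.card) : a ≤ mQuantile p X := by
  have hX : X ≠ 0 := by rintro rfl; simp at h
  rw [mQuantile_eq_getElem hp hX]
  by_contra! hlt
  have hcount : ⌈p * X.card⌉₊ - 1 + 1 ≤ (X.filter (· < a)).card := by
    have := (X.pairwise_sort _).sortedLE.succ_le_countP_lt _ hlt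
    rwa [← Multiset.coe_countP, Multiset.sort_eq, Multiset.countP_eq_card_filter] at this
  have hceil_pos : 0 < ⌈p * X.card⌉₊ := Nat.ceil_pos.mpr ((Nat.cast_nonneg _).trans_lt h)
  have hceil : ⌈p * X.card⌉₊ ≤ (X.filter (· < a)).card := by omega
  exact h.not_ge (Nat.ceil_le.mp hceil)

theorem mQuantile_le_of_card_filter_le (hp₀ : 0 < p) (hp₁ : p ≤ 1) (hX : X ≠ 0)
    (h : ((X.filter (b < ·)).card : ℝ) ≤ (1 - p) * X.card) : mQuantile p X ≤ b := by
  rw [mQuantile_eq_getElem hp₁ hX]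
  by_contra! hlt
  have hcount : X.card - (⌈p * X.card⌉₊ - 1) ≤ (X.filter (b < ·)).card := by
    have := (X.pairwise_sort _).sortedLE.length_sub_le_countP_gt _ hlt
    rwa [← Multiset.coe_countP, Multiset.sort_eq, Multiset.countP_eq_card_filter,
      Multiset.length_sort] at this
  have hceil_pos : 0 < ⌈p * X.card⌉₊ :=
    Nat.ceil_pos.mpr (mul_pos hp₀ (by exact_mod_cast Multiset.card_pos.mpr hX))
  have hnat : X.card + 1 ≤ (X.filter (b < ·)).card + ⌈p * X.card⌉₊ := by omega
  have hreal : (X.card : ℝ) + 1 ≤ (X.filter (b < ·)).card + ⌈p * X.card⌉₊ := by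
    exact_mod_cast hnat
  linarith [Nat.ceil_lt_add_one (by positivity : 0 ≤ p * X.card)]

theorem mQuantile_mem_trim25 (hX : X ≠ 0) : mQuantile 0.25 X ∈ trim25 X :=
  Multiset.mem_filter.mpr
    ⟨mQuantile_mem (by norm_num) hX, le_rfl, mQuantile_mono (by norm_num) (by norm_num) hX⟩

end Quantile

/-- If more than `3n/4` of the `n` elements of `X` lie in `[a, b]`, then every element of the
trimmed set `T_{0.25}X` lies in `[a, b]`, and hence so does the trimmed average. -/
theorem trimmed_mean_in_inlier_interval (X : Multiset ℝ) (n : ℕ) (hn : X.card = n)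
    (a b : ℝ)
    (hmaj : 3 * (n : ℝ) / 4 < ((X.filter (fun x => a ≤ x ∧ x ≤ b)).card : ℝ)) :
    (∀ x ∈ trim25 X, a ≤ x ∧ x ≤ b) ∧
    a ≤ (trim25 X).sum / ((trim25 X).card : ℝ) ∧
    (trim25 X).sum / ((trim25 X).card : ℝ) ≤ b := by
  subst hn
  have hX : X ≠ 0 := by rintro rfl; norm_num at hmaj
  have outliers_lt {r : ℝ → Prop} [DecidablePred r] (hr : ∀ x, r x → ¬(a ≤ x ∧ x ≤ b)) :
      ((X.filter r).card : ℝ) < X.card / 4 := by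
    have : ((X.filter r).card : ℝ) + (X.filter (fun x => a ≤ x ∧ x ≤ b)).card ≤ X.card := by
      exact_mod_cast X.card_filter_add_card_filter_le fun x _ => hr x
    linarith
  have hlow := outliers_lt (r := (· < a)) fun x hx hab => hx.not_ge hab.1
  have hhigh := outliers_lt (r := (b < ·)) fun x hx hab => hx.not_ge hab.2
  have hmem : ∀ x ∈ trim25 X, a ≤ x ∧ x ≤ b := by
    intro x hx
    rw [trim25, Multiset.mem_filter] at hx
    exact ⟨(le_mQuantile_of_card_filter_lt (by norm_num) (by linarith)).trans hx.2.1,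
      hx.2.2.trans (mQuantile_le_of_card_filter_le (by norm_num) (by norm_num) hX (by linarith))⟩
  exact ⟨hmem, Multiset.sum_div_card_mem_Icc
    (Multiset.card_pos_iff_exists_mem.mpr ⟨_, mQuantile_mem_trim25 hX⟩) hmem⟩
end

section
/- Fix a, b with 0 ≤ a < b and b − a < π, and let w_1, …, w_m be points on the unit circle with arguments in [a, b], with m > n/2 where n ≥ m is the total number of measurement points (the remaining n − m points are arbitrary on the circle). Then the function F(z) = Σ_{k=1}^n d_∠(z, w_k) (where w_{m+1},…,w_n are the arbitrary points) attains a local minimum at some point z with arg(z) ∈ [a, b]. -/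
/-- The angular distance on the unit circle. -/
noncomputable def dAng (z w : ℂ) : ℝ := |(z * (starRingEnd ℂ) w).arg|

/-!
On nonzero points, `dAng z w` is the distance between `arg z` and `arg w` in `Real.Angle`.
Minimize `F = ∑ k, dist · (arg w_k)` over the arc `[a', b']` spanned by the majority points. If
`φ` is within `π - (b' - a')` of the minimizer and `p` is its projection onto the arc, then every
majority point lies beyond `p` as seen from `φ`, hence is `dist φ p` farther from `φ` than from `p`,
while by the triangle inequality each other point is at most `dist φ p` closer. Since the majority
is at least half of the points, `F p ≤ F φ`, so the minimizer over the arc is a local minimizer.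
-/

open Real Complex Finset Set

theorem sum_dist_le_sum_dist_of_majority {X ι : Type*} [PseudoMetricSpace X] [Fintype ι]
    (S : Finset ι) (hS : Fintype.card ι ≤ 2 * #S) (y : ι → X) {p x : X}
    (hbtw : ∀ k ∈ S, dist x p + dist p (y k) = dist x (y k)) :
    ∑ k, dist p (y k) ≤ ∑ k, dist x (y k) := by
  classical
  have hin : ∑ k ∈ S, dist p (y k) = ∑ k ∈ S, dist x (y k) - #S * dist x p := by
    rw [← sum_congr rfl fun k hk => hbtw k hk, sum_add_distrib, sum_const, nsmul_eq_mul]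
    ring
  have hout : ∑ k ∈ Sᶜ, dist p (y k) ≤ ∑ k ∈ Sᶜ, dist x (y k) + #Sᶜ * dist x p := by
    rw [← nsmul_eq_mul, ← sum_const, ← sum_add_distrib]
    exact sum_le_sum fun k _ => (dist_triangle_left _ _ x).trans_eq (add_comm _ _)
  have hcard : (#Sᶜ : ℝ) ≤ #S := by
    rw [card_compl]; exact_mod_cast (by omega)
  rw [← sum_add_sum_compl S, ← sum_add_sum_compl S]
  nlinarith [dist_nonneg (x := x) (y := p)]

theorem Set.projIcc_mem_uIcc {α : Type*} [LinearOrder α] {a b c : α} (h : a ≤ b)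
    (hc : c ∈ Icc a b) (x : α) : (projIcc a b h x : α) ∈ uIcc x c := by
  rw [coe_projIcc, mem_uIcc]
  grind

namespace Real.Angle

theorem norm_coe_of_abs_le_pi {x : ℝ} (hx : |x| ≤ π) : ‖(x : Angle)‖ = |x| :=
  (AddCircle.norm_coe_eq_abs_iff (p := 2 * π) two_pi_pos.ne').2 <| by
    rwa [abs_of_pos two_pi_pos, mul_div_cancel_left₀ _ two_ne_zero]

theorem norm_eq_abs_toReal (θ : Angle) : ‖θ‖ = |θ.toReal| := by
  conv_lhs => rw [← coe_toReal θ]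
  exact norm_coe_of_abs_le_pi (abs_toReal_le_pi θ)

theorem dist_coe_coe_of_abs_sub_le_pi {s t : ℝ} (h : |s - t| ≤ π) :
    dist (s : Angle) t = |s - t| := by
  rw [dist_eq_norm, ← coe_sub, norm_coe_of_abs_le_pi h]

theorem dist_coe_add_dist_coe_of_mem_uIcc {s t u : ℝ} (ht : t ∈ uIcc s u) (h : |s - u| ≤ π) :
    dist (s : Angle) t + dist (t : Angle) u = dist (s : Angle) u := by
  have hst : |s - t| ≤ π := by
    rw [abs_sub_comm]; exact (abs_sub_left_of_mem_uIcc ht).trans (by rwa [abs_sub_comm])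
  have htu : |t - u| ≤ π := by
    rw [abs_sub_comm]; exact (abs_sub_right_of_mem_uIcc ht).trans (by rwa [abs_sub_comm])
  rw [dist_coe_coe_of_abs_sub_le_pi hst, dist_coe_coe_of_abs_sub_le_pi htu,
    dist_coe_coe_of_abs_sub_le_pi h, ← Real.dist_eq, ← Real.dist_eq, ← Real.dist_eq]
  exact dist_add_dist_of_mem_segment (segment_eq_uIcc s u ▸ ht)

theorem exists_coe_eq_and_abs_sub_eq_dist (x : Angle) (θ : ℝ) :
    ∃ φ : ℝ, (φ : Angle) = x ∧ |φ - θ| = dist x θ :=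
  ⟨θ + (x - θ).toReal, by rw [coe_add, coe_toReal, add_sub_cancel],
    by rw [add_sub_cancel_left, dist_eq_norm, norm_eq_abs_toReal]⟩

theorem exists_mem_Icc_isLocalMin_sum_dist {ι : Type*} [Fintype ι] (S : Finset ι)
    (hS : Fintype.card ι ≤ 2 * #S) (β : ι → ℝ) {a b : ℝ} (hab : a ≤ b) (hwidth : b - a < π)
    (hβ : ∀ k ∈ S, β k ∈ Icc a b) :
    ∃ θ ∈ Icc a b, IsLocalMin (fun x : Angle => ∑ k, dist x (β k)) θ := by
  set F := fun x : Angle => ∑ k, dist x (β k)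
  obtain ⟨θ, hθ, hmin⟩ := isCompact_Icc.exists_isMinOn (nonempty_Icc.2 hab)
    (by fun_prop : Continuous fun t : ℝ => F t).continuousOn
  refine ⟨θ, hθ, Metric.eventually_nhds_iff.2 ⟨π - (b - a), by linarith, fun x hx => ?_⟩⟩
  obtain ⟨φ, rfl, hφ⟩ := exists_coe_eq_and_abs_sub_eq_dist x θ
  have hnear : ∀ k ∈ S, |φ - β k| ≤ π := fun k hk => by
    have := Real.dist_le_of_mem_Icc hθ (hβ k hk)
    rw [Real.dist_eq] at this
    linarith [abs_sub_le φ θ (β k)]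
  calc F θ ≤ F (projIcc a b hab φ) := hmin (projIcc a b hab φ).2
    _ ≤ F φ := sum_dist_le_sum_dist_of_majority S hS _ fun k hk =>
        dist_coe_add_dist_coe_of_mem_uIcc (projIcc_mem_uIcc hab (hβ k hk) φ) (hnear k hk)

end Real.Angle

theorem Complex.arg_exp_mul_I_of_mem_Ioc {θ : ℝ} (h : θ ∈ Ioc (-π) π) :
    (exp (θ * I)).arg = θ := by
  rwa [arg_exp_mul_I, toIocMod_eq_self, show -π + 2 * π = π by ring]

theorem dAng_eq_dist_arg {z w : ℂ} (hz : z ≠ 0) (hw : w ≠ 0) :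
    dAng z w = dist (z.arg : Real.Angle) w.arg := by
  rw [dAng, ← arg_coe_angle_toReal_eq_arg, ← Real.Angle.norm_eq_abs_toReal,
    arg_mul_coe_angle hz ((map_ne_zero _).2 hw), arg_conj_coe_angle, dist_eq_norm,
    sub_eq_add_neg]

theorem l1_circle_local_min_in_arc_general (n m : ℕ) (ws : Fin n → ℂ) (a b : ℝ)
    (hwidth : b - a < Real.pi)
    (hunit : ∀ k, ‖ws k‖ = 1)
    (hin : ∀ k : Fin n, (k : ℕ) < m → (ws k).arg ∈ Set.Icc a b)
    (hmn : m ≤ n) (hmaj : (n : ℝ) / 2 < (m : ℝ)) :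
    ∃ z : ℂ, ‖z‖ = 1 ∧ z.arg ∈ Set.Icc a b ∧
      ∃ ε > 0, ∀ w : ℂ, ‖w‖ = 1 → dAng w z < ε →
        (∑ k, dAng z (ws k)) ≤ ∑ k, dAng w (ws k) := by
  have h2m : n < 2 * m := by exact_mod_cast (by linarith : (n : ℝ) < 2 * m)
  set S : Finset (Fin n) := {k | (k : ℕ) < m}
  have hcard : #S = m := by rw [Fin.card_filter_val_lt, min_eq_right hmn]
  have hS : S.Nonempty := card_pos.1 (by omega)
  set β : Fin n → ℝ := fun k => (ws k).arg
  -- Unlike `[a, b]`, the arc spanned by the majority lies in `(-π, π]`.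
  set a' := S.inf' hS β
  set b' := S.sup' hS β
  have ha' : a ≤ a' := le_inf' hS β fun k hk => (hin k ((mem_filter_univ k).1 hk)).1
  have hb' : b' ≤ b := sup'_le hS β fun k hk => (hin k ((mem_filter_univ k).1 hk)).2
  obtain ⟨θ, hθ, hmin⟩ := Real.Angle.exists_mem_Icc_isLocalMin_sum_dist S
    (by rw [Fintype.card_fin, hcard]; omega) β
    ((inf'_le β hS.choose_spec).trans (le_sup' β hS.choose_spec)) (by linarith)
    fun k hk => ⟨inf'_le β hk, le_sup' β hk⟩
  have harg : (exp (θ * I)).arg = θ := arg_exp_mul_I_of_mem_Ioc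
    ⟨(lt_inf'_iff hS).2 (fun k _ => neg_pi_lt_arg _) |>.trans_le hθ.1,
      hθ.2.trans (sup'_le hS β fun k _ => arg_le_pi _)⟩
  obtain ⟨ε, hε, hball⟩ := Metric.eventually_nhds_iff.1 hmin
  have hne : ∀ {z : ℂ}, ‖z‖ = 1 → z ≠ 0 := fun hz => norm_ne_zero_iff.1 (hz ▸ one_ne_zero)
  have hF : ∀ z : ℂ, ‖z‖ = 1 → ∑ k, dAng z (ws k) = ∑ k, dist (z.arg : Real.Angle) (β k) :=
    fun z hz => sum_congr rfl fun k _ => dAng_eq_dist_arg (hne hz) (hne (hunit k))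
  have hz : ‖exp (θ * I)‖ = 1 := norm_exp_ofReal_mul_I θ
  refine ⟨exp (θ * I), hz, harg.symm ▸ ⟨ha'.trans hθ.1, hθ.2.trans hb'⟩, ε, hε,
    fun w hw hwz => ?_⟩
  rw [dAng_eq_dist_arg (hne hw) (hne hz), harg] at hwz
  rw [hF _ hz, hF w hw, harg]
  exact hball hwz

/-- If a strict majority `m > n/2` of the unit-circle points `w_1, …, w_n` have arguments in an
arc `[a, b]` of width less than `π`, then `F(z) = Σ_k d_∠(z, w_k)` attains a local minimum (on
the circle) at some point with argument in `[a, b]`. -/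
theorem l1_circle_local_min_in_arc (n m : ℕ) (ws : Fin n → ℂ) (a b : ℝ)
    (h0a : 0 ≤ a) (hab : a < b) (hwidth : b - a < Real.pi)
    (hunit : ∀ k, ‖ws k‖ = 1)
    (hin : ∀ k : Fin n, (k : ℕ) < m → (ws k).arg ∈ Set.Icc a b)
    (hmn : m ≤ n) (hmaj : (n : ℝ) / 2 < (m : ℝ)) :
    ∃ z : ℂ, ‖z‖ = 1 ∧ z.arg ∈ Set.Icc a b ∧
      ∃ ε > 0, ∀ w : ℂ, ‖w‖ = 1 → dAng w z < ε →
        (∑ k, dAng z (ws k)) ≤ ∑ k, dAng w (ws k) :=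
  l1_circle_local_min_in_arc_general n m ws a b hwidth hunit hin hmn hmaj
end

section
/- Let B̄ = {x ∈ R^D : ‖x − c‖ ≤ r} be a closed ball, let R be a finite subset of B̄, and suppose there is a unit vector v such that no point of R lies in the set {x ∈ ∂B : ⟨v, x − c⟩ ≤ 0} (the closed half of the boundary sphere opposite v). Then R is contained in a closed ball of radius strictly less than r. -/
/-!
Moving the centre from `c` to `c + t • v` changes the squared distance to `x` by
`t (t ‖v‖² - 2 ⟪v, x - c⟫)`. For a point strictly inside the ball this is harmless for small `t`
by continuity; for a point on the sphere `⟪v, x - c⟫ > 0`, so the change is negative for small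
`t > 0`. Hence for some `t > 0` the finite set `R` lies in the open ball of radius `r` about
`c + t • v`, and its largest distance to that centre is a radius `r' < r`.
-/

open Filter Topology RealInnerProductSpace

theorem Finset.exists_lt_subset_closedBall_of_subset_ball {α : Type*} [PseudoMetricSpace α]
    {s : Finset α} {x : α} {r : ℝ} (h : (s : Set α) ⊆ Metric.ball x r) :
    ∃ r' < r, (s : Set α) ⊆ Metric.closedBall x r' := by
  rcases s.eq_empty_or_nonempty with rfl | hne
  · exact ⟨r - 1, by linarith, by simp⟩
  exact ⟨s.sup' hne (dist · x), (Finset.sup'_lt_iff hne).2 fun y hy => h hy,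
    fun y hy => Finset.le_sup' (dist · x) hy⟩

section InnerProductSpace

variable {E : Type*} [NormedAddCommGroup E] [InnerProductSpace ℝ E]

theorem norm_sub_smul_sq_eq (w v : E) (t : ℝ) :
    ‖w - t • v‖ ^ 2 = ‖w‖ ^ 2 - t * (2 * ⟪v, w⟫ - t * ‖v‖ ^ 2) := by
  rw [norm_sub_sq_real, real_inner_smul_right, real_inner_comm, norm_smul, mul_pow,
    Real.norm_eq_abs, sq_abs]
  ring

theorem eventually_norm_sub_smul_lt_of_norm_lt {w : E} {r : ℝ} (hw : ‖w‖ < r) (v : E) :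
    ∀ᶠ t in 𝓝[>] (0 : ℝ), ‖w - t • v‖ < r := by
  have hcont : Continuous fun t : ℝ => ‖w - t • v‖ := by fun_prop
  exact nhdsWithin_le_nhds ((hcont.tendsto' 0 ‖w‖ (by simp)).eventually (gt_mem_nhds hw))

theorem eventually_norm_sub_smul_lt_of_inner_pos {w v : E} (hv : 0 < ⟪v, w⟫) :
    ∀ᶠ t in 𝓝[>] (0 : ℝ), ‖w - t • v‖ < ‖w‖ := by
  have hsmall : ∀ᶠ t in 𝓝 (0 : ℝ), t * ‖v‖ ^ 2 < 2 * ⟪v, w⟫ := by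
    have hcont : Continuous fun t : ℝ => t * ‖v‖ ^ 2 := by fun_prop
    exact hcont.tendsto' 0 0 (zero_mul _) |>.eventually (gt_mem_nhds (by linarith))
  filter_upwards [nhdsWithin_le_nhds hsmall, self_mem_nhdsWithin] with t ht (htpos : 0 < t)
  have hsq : ‖w - t • v‖ ^ 2 < ‖w‖ ^ 2 := by
    rw [norm_sub_smul_sq_eq]
    nlinarith
  exact lt_of_pow_lt_pow_left₀ 2 (norm_nonneg w) hsq

theorem eventually_norm_sub_smul_lt {w v : E} {r : ℝ} (hw : ‖w‖ ≤ r)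
    (hbd : ¬(‖w‖ = r ∧ ⟪v, w⟫ ≤ 0)) :
    ∀ᶠ t in 𝓝[>] (0 : ℝ), ‖w - t • v‖ < r := by
  rcases hw.lt_or_eq with hlt | rfl
  · exact eventually_norm_sub_smul_lt_of_norm_lt hlt v
  · exact eventually_norm_sub_smul_lt_of_inner_pos (not_le.1 fun h => hbd ⟨rfl, h⟩)

end InnerProductSpace

theorem shrinking_ball_general (D : ℕ) (c : EuclideanSpace ℝ (Fin D)) (r : ℝ)
    (R : Finset (EuclideanSpace ℝ (Fin D)))
    (hR : (R : Set (EuclideanSpace ℝ (Fin D))) ⊆ Metric.closedBall c r)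
    (v : EuclideanSpace ℝ (Fin D))
    (hbd : ∀ x ∈ R, ¬(‖x - c‖ = r ∧ ⟪v, x - c⟫ ≤ 0)) :
    ∃ (c' : EuclideanSpace ℝ (Fin D)) (r' : ℝ), r' < r ∧
      (R : Set (EuclideanSpace ℝ (Fin D))) ⊆ Metric.closedBall c' r' := by
  have hshift : ∀ᶠ t in 𝓝[>] (0 : ℝ), ∀ x ∈ R, ‖x - c - t • v‖ < r := by
    refine (Finset.eventually_all R).2 fun x hx => eventually_norm_sub_smul_lt ?_ (hbd x hx)
    simpa [dist_eq_norm] using hR hx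
  obtain ⟨t, ht⟩ := hshift.exists
  have hball : (R : Set (EuclideanSpace ℝ (Fin D))) ⊆ Metric.ball (c + t • v) r := by
    intro x hx
    rw [Metric.mem_ball, dist_eq_norm, ← sub_sub]
    exact ht x hx
  obtain ⟨r', hr', hsub⟩ := Finset.exists_lt_subset_closedBall_of_subset_ball hball
  exact ⟨c + t • v, r', hr', hsub⟩

/-- Shrinking ball lemma (Euclidean version): if a finite set `R` lies in the closed ball
`B̄(c, r)` and no point of `R` lies on the closed boundary hemisphere
`{x : ‖x − c‖ = r, ⟪v, x − c⟫ ≤ 0}` for some unit vector `v`, then `R` is contained in a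
closed ball of radius strictly less than `r`. -/
theorem shrinking_ball (D : ℕ) (c : EuclideanSpace ℝ (Fin D)) (r : ℝ)
    (R : Finset (EuclideanSpace ℝ (Fin D)))
    (hR : (R : Set (EuclideanSpace ℝ (Fin D))) ⊆ Metric.closedBall c r)
    (v : EuclideanSpace ℝ (Fin D)) (hv : ‖v‖ = 1)
    (hbd : ∀ x ∈ R, ¬(‖x - c‖ = r ∧ ⟪v, x - c⟫ ≤ 0)) :
    ∃ (c' : EuclideanSpace ℝ (Fin D)) (r' : ℝ), r' < r ∧
      (R : Set (EuclideanSpace ℝ (Fin D))) ⊆ Metric.closedBall c' r' :=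
  shrinking_ball_general D c r R hR v hbd
end

section
/- Let X be a finite multiset of n reals, let δ > 0, and suppose at least ⌈3n/4⌉ + 1 elements of X lie in [−δ/2, δ/2] with at least one element in (−δ/2, δ/2) counted among the 1/4-trimmed set. If fewer than n/2 of the trimmed elements equal the left endpoint −δ/2, then the trimmed average ave(T_{0.25}X) > −δ/2. -/
open Classical

/-
Fewer than `⌈n/4⌉` elements of `X` lie below `-δ/2`, since at least `⌈3n/4⌉ + 1` lie in
`[-δ/2, δ/2]`. Hence the 0.25-quantile, and with it every trimmed element, is at least `-δ/2`;
as one trimmed element lies strictly above `-δ/2`, so does the trimmed average.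
-/

theorem List.Pairwise.le_getElem_of_length_filter_lt_le {α : Type*} [LinearOrder α] {l : List α}
    (hl : l.Pairwise (· ≤ ·)) {c : α} {i : ℕ} (hi : i < l.length)
    (h : (l.filter (· < c)).length ≤ i) : c ≤ l[i] := by
  by_contra! hlt
  have hprefix : ∀ x ∈ l.take (i + 1), x < c := by
    intro x hx
    obtain ⟨j, hj, rfl⟩ := List.mem_iff_getElem.1 hx
    rw [List.length_take] at hj
    rw [List.getElem_take]
    have hji : l[j] ≤ l[i] :=
      hl.rel_get_of_le (a := ⟨j, by omega⟩) (b := ⟨i, hi⟩) (Fin.mk_le_mk.2 (by omega))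
    exact hji.trans_lt hlt
  have hcount : i + 1 ≤ (l.filter (· < c)).length := by
    calc i + 1 = ((l.take (i + 1)).filter (· < c)).length := by
          rw [List.filter_eq_self.2 (by simpa using hprefix), List.length_take]; omega
      _ ≤ _ := ((List.take_sublist _ _).filter _).length_le
  omega

theorem le_mQuantile {p c : ℝ} {X : Multiset ℝ} (hp : p ≤ 1)
    (h : (X.filter (· < c)).card < ⌈p * X.card⌉₊) : c ≤ mQuantile p X := by
  have hle : ⌈p * X.card⌉₊ ≤ X.card :=
    Nat.ceil_le.2 (by nlinarith [(X.card.cast_nonneg : (0 : ℝ) ≤ _)])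
  have hfilter : ((X.sort (· ≤ ·)).filter (· < c)).length = (X.filter (· < c)).card := by
    rw [← Multiset.coe_card, ← Multiset.filter_coe, Multiset.sort_eq]
  have hi : ⌈p * X.card⌉₊ - 1 < (X.sort (· ≤ ·)).length := by rw [Multiset.length_sort]; omega
  rw [mQuantile, List.getD_eq_getElem _ _ hi]
  exact (X.pairwise_sort _).le_getElem_of_length_filter_lt_le hi (by omega)

theorem Multiset.card_filter_add_card_filter_le_s19 {α : Type*} {s : Multiset α} {p q : α → Prop}
    [DecidablePred p] [DecidablePred q] (h : ∀ x ∈ s, p x → ¬ q x) :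
    (s.filter p).card + (s.filter q).card ≤ s.card := by
  have hdisj : s.filter (fun x => p x ∧ q x) = 0 :=
    Multiset.filter_eq_nil.2 fun x hx hpq => h x hx hpq.1 hpq.2
  rw [← Multiset.card_add, Multiset.filter_add_filter, hdisj, add_zero]
  exact Multiset.card_le_card (Multiset.filter_le _ _)

theorem card_filter_lt_lt_ceil {X : Multiset ℝ} {a b p q : ℝ} (hpq : p + q = 1)
    (h : ⌈q * X.card⌉₊ < (X.filter (fun x => a ≤ x ∧ x ≤ b)).card) :
    (X.filter (· < a)).card < ⌈p * X.card⌉₊ := by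
  have hsplit := X.card_filter_add_card_filter_le_s19 (p := (· < a)) (q := fun x => a ≤ x ∧ x ≤ b)
    fun x _ hx hx' => hx.not_ge hx'.1
  have hceil : X.card ≤ ⌈p * X.card⌉₊ + ⌈q * X.card⌉₊ := by
    calc X.card = ⌈p * X.card + q * X.card⌉₊ := by rw [← add_mul, hpq, one_mul, Nat.ceil_natCast]
      _ ≤ _ := Nat.ceil_add_le _ _
  omega

theorem Multiset.lt_sum_div_card {α : Type*} [Field α] [LinearOrder α] [IsStrictOrderedRing α]
    {s : Multiset α} {a : α} (hle : ∀ x ∈ s, a ≤ x) (hlt : ∃ x ∈ s, a < x) :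
    a < s.sum / s.card := by
  have hcard : (0 : α) < s.card := by
    obtain ⟨x, hx, -⟩ := hlt
    exact_mod_cast Multiset.card_pos_iff_exists_mem.2 ⟨x, hx⟩
  rw [lt_div_iff₀ hcard]
  simpa [mul_comm] using Multiset.sum_lt_sum (f := fun _ => a) (g := id) hle hlt

theorem trimmed_mean_strictly_above_boundary_general (X : Multiset ℝ) (n : ℕ) (hn : X.card = n)
    (δ : ℝ)
    (hcount : ⌈3 * (n : ℝ) / 4⌉₊ + 1 ≤ (X.filter (fun x => -δ / 2 ≤ x ∧ x ≤ δ / 2)).card)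
    (hmem : ∃ x ∈ trim25 X, -δ / 2 < x ∧ x < δ / 2) :
    -δ / 2 < (trim25 X).sum / ((trim25 X).card : ℝ) := by
  subst hn
  rw [mul_div_right_comm] at hcount
  have hquantile : -δ / 2 ≤ mQuantile 0.25 X :=
    le_mQuantile (by norm_num) (card_filter_lt_lt_ceil (by norm_num) hcount)
  obtain ⟨x, hx, hlt, -⟩ := hmem
  exact Multiset.lt_sum_div_card
    (fun y hy => hquantile.trans (Multiset.mem_filter.1 hy).2.1) ⟨x, hx, hlt⟩

/-- If at least `⌈3n/4⌉ + 1` elements of `X` lie in `[−δ/2, δ/2]`, some trimmed element lies in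
the open interval `(−δ/2, δ/2)`, and fewer than `n/2` of the trimmed elements equal the left
endpoint `−δ/2`, then the trimmed average is strictly greater than `−δ/2`. -/
theorem trimmed_mean_strictly_above_boundary (X : Multiset ℝ) (n : ℕ) (hn : X.card = n)
    (δ : ℝ) (hδ : 0 < δ)
    (hcount : ⌈3 * (n : ℝ) / 4⌉₊ + 1 ≤ (X.filter (fun x => -δ / 2 ≤ x ∧ x ≤ δ / 2)).card)
    (hmem : ∃ x ∈ trim25 X, -δ / 2 < x ∧ x < δ / 2)
    (hleft : (((trim25 X).filter (fun x => x = -δ / 2)).card : ℝ) < (n : ℝ) / 2) :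
    -δ / 2 < (trim25 X).sum / ((trim25 X).card : ℝ) :=
  trimmed_mean_strictly_above_boundary_general X n hn δ hcount hmem
end
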